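/- arXiv:1112.0930 — 5 statements merged into one kernel-verified Lean document; each statement's English description precedes it below -/
import Mathlib

section
/- Let X be a set, h : X → ℝ, and G act on X with |(h(g·x) − h(g·y)) − (h(x) − h(y))| ≤ B for all g, x, y. If there exists g ∈ G and a ∈ X with h(gⁿ·a) → +∞ as n → +∞, then the homogenization μʰ of μ(g) := h(g·a) − h(a) is a nonzero homogeneous quasimorphism on G. -/
/-!
Applying the bound at the points `y • a` and `a` shows that `μ g = h (g • a) - h a` is a
quasimorphism of defect `B`. Its homogenization is then homogeneous and stays within `B` of `μ`,
hence is itself a quasimorphism. It cannot vanish: otherwise `μ (g₀ ^ n)` would stay below `B`,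
whereas it tends to `+∞` by assumption.
-/

open Filter Topology

def IsQuasimorphism {G : Type*} [Mul G] (μ : G → ℝ) (D : ℝ) : Prop :=
  ∀ x y : G, |μ (x * y) - μ x - μ y| ≤ D

namespace IsQuasimorphism

variable {G : Type*} {μ ν : G → ℝ} {D E : ℝ}

theorem of_abs_sub_le [Mul G] (hμ : IsQuasimorphism μ D) (hν : ∀ g, |ν g - μ g| ≤ E) :
    IsQuasimorphism ν (D + 3 * E) := by
  intro x y
  have hxy := abs_le.mp (hμ x y)
  have h₁ := abs_le.mp (hν (x * y))
  have h₂ := abs_le.mp (hν x)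
  have h₃ := abs_le.mp (hν y)
  exact abs_le.mpr ⟨by linarith, by linarith⟩

theorem abs_map_pow_succ_sub_le [Monoid G] (hμ : IsQuasimorphism μ D) (g : G) (n : ℕ) :
    |μ (g ^ (n + 1)) - (n + 1) * μ g| ≤ n * D := by
  induction n with
  | zero => simp
  | succ n ih =>
    calc |μ (g ^ (n + 1 + 1)) - ((n + 1 : ℕ) + 1) * μ g|
        = |(μ (g ^ (n + 1) * g) - μ (g ^ (n + 1)) - μ g) + (μ (g ^ (n + 1)) - (n + 1) * μ g)| := by
          rw [pow_succ _ (n + 1)]; push_cast; ring_nf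
      _ ≤ D + n * D := (abs_add_le _ _).trans (add_le_add (hμ _ _) ih)
      _ = (n + 1 : ℕ) * D := by push_cast; ring

theorem abs_sub_le_of_tendsto [Monoid G] (hμ : IsQuasimorphism μ D) {g : G} {L : ℝ}
    (hlim : Tendsto (fun n : ℕ => μ (g ^ n) / n) atTop (𝓝 L)) : |L - μ g| ≤ D := by
  have hD : 0 ≤ D := (abs_nonneg _).trans (hμ 1 1)
  have hsucc := ((tendsto_add_atTop_iff_nat 1).mpr hlim).sub_const (μ g) |>.abs
  refine le_of_tendsto hsucc (Eventually.of_forall fun n => ?_)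
  have hn : (0 : ℝ) < n + 1 := by positivity
  calc |μ (g ^ (n + 1)) / (n + 1 : ℕ) - μ g|
      = |μ (g ^ (n + 1)) - (n + 1) * μ g| / (n + 1) := by
        push_cast; rw [div_sub' hn.ne', abs_div, abs_of_pos hn, mul_comm]
    _ ≤ n * D / (n + 1) := by gcongr; exact hμ.abs_map_pow_succ_sub_le g n
    _ ≤ D := by rw [div_le_iff₀ hn]; nlinarith

theorem eq_neg_of_tendsto [Group G] (hμ : IsQuasimorphism μ D) {g : G} {L L' : ℝ}
    (hlim : Tendsto (fun n : ℕ => μ (g ^ n) / n) atTop (𝓝 L))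
    (hlim' : Tendsto (fun n : ℕ => μ (g⁻¹ ^ n) / n) atTop (𝓝 L')) : L' = -L := by
  have hbdd : ∀ n : ℕ, |μ (g ^ n) + μ (g⁻¹ ^ n) - μ 1| ≤ D := fun n => by
    simpa [abs_sub_comm, sub_sub] using hμ (g ^ n) (g⁻¹ ^ n)
  have hzero : Tendsto (fun n : ℕ => (μ (g ^ n) + μ (g⁻¹ ^ n)) / n) atTop (𝓝 0) :=
    tendsto_bdd_div_atTop_nhds_zero (b := μ 1 - D) (B := μ 1 + D)
      (Eventually.of_forall fun n => by linarith [(abs_le.mp (hbdd n)).1])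
      (Eventually.of_forall fun n => by linarith [(abs_le.mp (hbdd n)).2])
      tendsto_natCast_atTop_atTop
  have hsum := hlim.add hlim'
  simp only [← add_div] at hsum
  linarith [tendsto_nhds_unique hsum hzero]

end IsQuasimorphism

section Homogenization

variable {G : Type*} {μ μh : G → ℝ}

theorem map_pow_eq_mul_of_tendsto [Monoid G]
    (hlim : ∀ g, Tendsto (fun n : ℕ => μ (g ^ n) / n) atTop (𝓝 (μh g))) (g : G) (m : ℕ) :
    μh (g ^ m) = m * μh g := by
  rcases Nat.eq_zero_or_pos m with rfl | hm
  · have h₀ : Tendsto (fun n : ℕ => μ ((g ^ 0) ^ n) / n) atTop (𝓝 0) := by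
      simpa using tendsto_const_div_atTop_nhds_zero_nat (μ 1)
    simpa using tendsto_nhds_unique (hlim (g ^ 0)) h₀
  · have hmul : Tendsto (fun n : ℕ => m * n) atTop atTop :=
      tendsto_id.const_mul_atTop' hm
    refine tendsto_nhds_unique (hlim (g ^ m)) ?_
    refine (((hlim g).comp hmul).const_mul (m : ℝ)).congr' ?_
    filter_upwards [eventually_ne_atTop 0] with n hn
    have hm₀ : (m : ℝ) ≠ 0 := by positivity
    simp only [Function.comp_apply, ← pow_mul, Nat.cast_mul]
    field_simp

theorem map_zpow_of_map_pow [Group G] (hpow : ∀ (g : G) (m : ℕ), μh (g ^ m) = m * μh g)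
    (hinv : ∀ g : G, μh g⁻¹ = -μh g) (g : G) (n : ℤ) : μh (g ^ n) = n * μh g := by
  cases n with
  | ofNat m => simpa using hpow g m
  | negSucc m => rw [zpow_negSucc, hinv, hpow]; push_cast; ring

theorem ne_zero_of_tendsto_atTop [Monoid G] {D : ℝ}
    (hpow : ∀ (g : G) (m : ℕ), μh (g ^ m) = m * μh g) (hclose : ∀ g, |μh g - μ g| ≤ D) {g₀ : G}
    (hdiv : Tendsto (fun n : ℕ => μ (g₀ ^ n)) atTop atTop) : μh g₀ ≠ 0 := by
  intro h₀
  obtain ⟨k, hk⟩ := (hdiv.eventually_gt_atTop D).exists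
  have := (abs_le.mp (hclose (g₀ ^ k))).1
  rw [hpow, h₀, mul_zero] at this
  linarith

end Homogenization

theorem isQuasimorphism_orbit {G X : Type*} [Monoid G] [MulAction G X] {h : X → ℝ} {B : ℝ}
    (hbound : ∀ (g : G) (x y : X), |(h (g • x) - h (g • y)) - (h x - h y)| ≤ B) (a : X) :
    IsQuasimorphism (fun g : G => h (g • a) - h a) B := fun x y => by
  simpa only [mul_smul, sub_sub_sub_cancel_right] using hbound x (y • a) a

theorem stmt_5 {G X : Type*} [Group G] [MulAction G X] (h : X → ℝ) (B : ℝ)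
    (hbound : ∀ (g : G) (x y : X), |(h (g • x) - h (g • y)) - (h x - h y)| ≤ B)
    (a : X) (g₀ : G)
    (hdiv : Tendsto (fun n : ℕ => h (g₀ ^ n • a)) atTop atTop)
    (μh : G → ℝ)
    (hlim : ∀ g : G, Tendsto (fun n : ℕ => (h (g ^ n • a) - h a) / n) atTop (nhds (μh g))) :
    μh ≠ 0 ∧ (∀ (g : G) (n : ℤ), μh (g ^ n) = n * μh g) ∧
      (∃ C : ℝ, ∀ x y : G, |μh (x * y) - μh x - μh y| ≤ C) := by
  let μ : G → ℝ := fun g => h (g • a) - h a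
  have hμ : IsQuasimorphism μ B := isQuasimorphism_orbit hbound a
  have hlim' : ∀ g, Tendsto (fun n : ℕ => μ (g ^ n) / n) atTop (𝓝 (μh g)) := hlim
  have hclose (g : G) : |μh g - μ g| ≤ B := hμ.abs_sub_le_of_tendsto (hlim' g)
  have hpow := map_pow_eq_mul_of_tendsto hlim'
  have hinv (g : G) : μh g⁻¹ = -μh g := hμ.eq_neg_of_tendsto (hlim' g) (hlim' g⁻¹)
  have hdiv' : Tendsto (fun n : ℕ => μ (g₀ ^ n)) atTop atTop := by
    simpa only [μ, sub_eq_add_neg] using tendsto_atTop_add_const_right _ (-h a) hdiv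
  refine ⟨fun h₀ => ?_, map_zpow_of_map_pow hpow hinv, B + 3 * B, hμ.of_abs_sub_le hclose⟩
  exact ne_zero_of_tendsto_atTop hpow hclose hdiv' (congrFun h₀ g₀)
end

section
/- The commuting assumption can be relaxed: if the G-action and A-action on X merely almost commute, meaning |h(α(g·x)) − h(g(α·x))| ≤ D for all α ∈ A, g ∈ G, x ∈ X and a universal constant D, and all other hypotheses of the main theorem hold, then μ(g) := h(g·a) − h(a) is still a quasimorphism on G. -/
theorem stmt_10 {A G X : Type*} [Group A] [Group G] [MulAction A X] [MulAction G X]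
    (F : A → Set X) (hpart : ∀ x : X, ∃! α : A, x ∈ F α)
    (hbij : ∀ α : A, Set.BijOn (fun x => α • x) (F 1) (F α))
    (h : X → ℝ) (hF1 : ∀ x ∈ F 1, h x ∈ Set.Ico (0 : ℝ) 1)
    (ρ : A → ℤ) (hρ : ∀ α β : A, ρ (α * β) = ρ α + ρ β)
    (b : X → A → ℝ) (M₀ : ℝ) (hb : ∀ (x : X) (α : A), |b x α| ≤ M₀)
    (hform : ∀ (α : A), ∀ x ∈ F 1, h (α • x) = h x + ρ α + b x α)
    (D : ℝ)
    (halmost : ∀ (α : A) (g : G) (x : X), |h (α • (g • x)) - h (g • (α • x))| ≤ D)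
    (C₀ : ℝ)
    (hG : ∀ g : G, ∃ r : ℝ, ∀ x ∈ F 1, h (g • x) ∈ Set.Icc r (r + C₀))
    (a : X) :
    ∃ C : ℝ, ∀ x y : G,
      |(h ((x * y) • a) - h a) - (h (x • a) - h a) - (h (y • a) - h a)| ≤ C := by
  classical
  choose r hr using hG
  have lemA : ∀ (α : A) (q : X), |h (α • q) - h q - ρ α| ≤ 2 * M₀ := by
    intro α q
    obtain ⟨β, hβ, -⟩ := hpart q
    obtain ⟨q₀, hq₀, hq₀eq⟩ := (hbij β).surjOn hβ
    simp only at hq₀eq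
    have e1 : h q = h q₀ + ρ β + b q₀ β := by rw [← hq₀eq]; exact hform β q₀ hq₀
    have e2 : h (α • q) = h q₀ + ρ (α * β) + b q₀ (α * β) := by
      rw [← hq₀eq, ← mul_smul]; exact hform (α * β) q₀ hq₀
    have hb1 := hb q₀ β
    have hb2 := hb q₀ (α * β)
    rw [abs_le] at hb1 hb2 ⊢
    rw [e1, e2, hρ]
    push_cast
    constructor <;> linarith [hb1.1, hb1.2, hb2.1, hb2.2]
  have lemB : ∀ (g : G) (p : X), |h (g • p) - h p - r g| ≤ D + 3 * M₀ + C₀ + 1 := by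
    intro g p
    obtain ⟨β, hβ, -⟩ := hpart p
    obtain ⟨p₀, hp₀, hpeq⟩ := (hbij β).surjOn hβ
    simp only at hpeq
    have e1 : h p = h p₀ + ρ β + b p₀ β := by rw [← hpeq]; exact hform β p₀ hp₀
    have h01 := hF1 p₀ hp₀
    have hrg := hr g p₀ hp₀
    have hD := halmost β g p₀
    have hA := lemA β (g • p₀)
    have hbb := hb p₀ β
    have e2 : h (g • p) = h (g • β • p₀) := by rw [hpeq]
    rw [abs_le] at hD hA hbb ⊢
    constructor <;> rw [e1, e2] <;>
      linarith [hD.1, hD.2, hA.1, hA.2, hbb.1, hbb.2, h01.1, h01.2, hrg.1, hrg.2]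
  refine ⟨2 * (D + 3 * M₀ + C₀ + 1), fun x y => ?_⟩
  have h1 := lemB x (y • a)
  have h2 := lemB x a
  rw [mul_smul]
  rw [abs_le] at h1 h2 ⊢
  constructor <;> linarith [h1.1, h1.2, h2.1, h2.2]
end

section
/- In the ladder construction, the quasimorphism can be recovered from the action: with Ψ : G → 𝓛 a level-respecting bijection (second coordinate of Ψ(x) equals μ₀(x)) and h : 𝓛 → ℤ the projection to the second coordinate, for every g ∈ G and every point p ∈ 𝓛 the limit lim_{n→∞} h(gⁿ · p)/n exists and equals the homogenization μ of μ₀; in particular it is independent of the choice of p. -/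
open Filter

theorem stmt_13 {G : Type*} [Group G] [Countable G]
    (H : Set ℝ) (hH : H ⊆ Set.Ioo 0 1) (hHc : H.Countable)
    (μ₀ : G → ℤ) (B : ℝ)
    (hq : ∀ x y : G, |(μ₀ (x * y) : ℝ) - μ₀ x - μ₀ y| ≤ B)
    (μ : G → ℝ)
    (hhomog : ∀ g : G, Tendsto (fun n : ℕ => (μ₀ (g ^ n) : ℝ) / n) atTop (nhds (μ g)))
    (Ψ : G → H × ℤ) (hΨ : Function.Bijective Ψ)
    (hlevel : ∀ x : G, (Ψ x).2 = μ₀ x) :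
    ∀ (g : G) (p : H × ℤ),
      Tendsto (fun n : ℕ => ((Ψ (g ^ n * Function.invFun Ψ p)).2 : ℝ) / n)
        atTop (nhds (μ g)) := by
  intro g p
  set x := Function.invFun Ψ p with hx
  simp only [hlevel]
  have h1 : Tendsto (fun n : ℕ => ((μ₀ (g ^ n * x) : ℝ) - μ₀ (g ^ n)) / n) atTop (nhds 0) := by
    apply squeeze_zero_norm' (a := fun n : ℕ => (B + |(μ₀ x : ℝ)|) / n)
    · filter_upwards [eventually_ge_atTop 1] with n hn
      have hn' : (0:ℝ) < n := by exact_mod_cast hn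
      rw [Real.norm_eq_abs, abs_div, abs_of_pos hn']
      apply div_le_div_of_nonneg_right ?_ hn'.le |>.trans_eq rfl
      calc |(μ₀ (g ^ n * x) : ℝ) - μ₀ (g ^ n)|
          ≤ |(μ₀ (g ^ n * x) : ℝ) - μ₀ (g ^ n) - μ₀ x| + |(μ₀ x : ℝ)| := by
            have := abs_sub_abs_le_abs_sub ((μ₀ (g ^ n * x) : ℝ) - μ₀ (g ^ n)) (μ₀ x)
            have h := abs_add_le ((μ₀ (g ^ n * x) : ℝ) - μ₀ (g ^ n) - μ₀ x) (μ₀ x : ℝ)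
            calc |(μ₀ (g ^ n * x) : ℝ) - μ₀ (g ^ n)|
                = |((μ₀ (g ^ n * x) : ℝ) - μ₀ (g ^ n) - μ₀ x) + μ₀ x| := by ring_nf
              _ ≤ _ := h
        _ ≤ B + |(μ₀ x : ℝ)| := by
            have := hq (g ^ n) x
            linarith
    · exact tendsto_const_div_atTop_nhds_zero_nat _
  have h2 := (hhomog g).add h1
  rw [add_zero] at h2
  convert h2 using 2 with n
  push_cast
  ring
end

section
/- In the ladder construction, linearly independent homogeneous quasimorphisms give inequivalent representations: if μ and m are homogeneous quasimorphisms on a countable group G that are linearly independent over ℝ, then the induced actions Ψ^μ and Ψ^m of G on 𝓛 are not equivalent; i.e., there is no universal constant C such that |h(Ψ^μ-orbit of g at p) − h(Ψ^m-orbit of g at p)| ≤ C for all g ∈ G and p ∈ 𝓛. Concretely: there is no constant C with |μ₀(g x) − m₀(g x')| ≤ C for all g, where μ₀, m₀ are the integer-valued quasimorphisms representing μ, m. -/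
open Filter

theorem stmt_14 {G : Type*} [Group G] [Countable G]
    (μ m : G → ℝ) (μ₀ m₀ : G → ℤ) (B₁ B₂ : ℝ)
    (hq₁ : ∀ x y : G, |(μ₀ (x * y) : ℝ) - μ₀ x - μ₀ y| ≤ B₁)
    (hq₂ : ∀ x y : G, |(m₀ (x * y) : ℝ) - m₀ x - m₀ y| ≤ B₂)
    (hhomμ : ∀ g : G, Tendsto (fun n : ℕ => (μ₀ (g ^ n) : ℝ) / n) atTop (nhds (μ g)))
    (hhomm : ∀ g : G, Tendsto (fun n : ℕ => (m₀ (g ^ n) : ℝ) / n) atTop (nhds (m g)))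
    (hindep : ∀ a b : ℝ, (∀ g : G, a * μ g + b * m g = 0) → a = 0 ∧ b = 0) :
    ¬ ∃ C : ℝ, ∀ g : G, |(μ₀ g : ℝ) - (m₀ g : ℝ)| ≤ C := by
  rintro ⟨C, hC⟩
  have heq : ∀ g : G, μ g = m g := by
    intro g
    have h1 : Tendsto (fun n : ℕ => (μ₀ (g ^ n) : ℝ) / n - (m₀ (g ^ n) : ℝ) / n)
        atTop (nhds (μ g - m g)) := (hhomμ g).sub (hhomm g)
    have h2 : Tendsto (fun n : ℕ => (μ₀ (g ^ n) : ℝ) / n - (m₀ (g ^ n) : ℝ) / n)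
        atTop (nhds 0) := by
      refine squeeze_zero_norm (a := fun n : ℕ => C / n) (fun n => ?_)
        (tendsto_const_nhds.div_atTop (tendsto_natCast_atTop_atTop (R := ℝ)))
      rw [Real.norm_eq_abs, div_sub_div_same, abs_div, abs_of_nonneg (by positivity : (0:ℝ) ≤ (n:ℝ))]
      rcases Nat.eq_zero_or_pos n with h | h
      · simp [h]
      · exact div_le_div_of_nonneg_right (hC _) (by exact_mod_cast h.le)
    have := tendsto_nhds_unique h1 h2
    linarith
  have := hindep 1 (-1) (fun g => by rw [heq g]; ring)
  exact one_ne_zero this.1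
end

section
/- Under the hypotheses of the monotone example (triple (X, h, ℤ) with b ≡ 0, and G a set of bijections commuting with ℤ, h-monotone, and preserving h-level sets), the set G is closed under composition and inversion, i.e., G can be taken to be a group, and the function μ(g) := h(g·a) − h(a) is a quasimorphism on G. -/
theorem stmt_17 {X : Type*}
    (e : ℤ → X → X) (he0 : ∀ x : X, e 0 x = x)
    (headd : ∀ (m n : ℤ) (x : X), e m (e n x) = e (m + n) x)
    (F : ℤ → Set X) (hpart : ∀ x : X, ∃! n : ℤ, x ∈ F n)
    (hbij : ∀ n : ℤ, Set.BijOn (e n) (F 0) (F n))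
    (h : X → ℝ) (hF0 : ∀ x ∈ F 0, h x ∈ Set.Ico (0 : ℝ) 1)
    (hform : ∀ (n : ℤ), ∀ x ∈ F 0, h (e n x) = h x + n)
    (P : (X ≃ X) → Prop)
    (hP : ∀ g : X ≃ X, P g ↔
      ((∀ (n : ℤ) (x : X), g (e n x) = e n (g x)) ∧
       (∀ x y : X, h (g x) ≥ h (g y) ↔ h x ≥ h y) ∧
       (∀ x y : X, h x = h y → h (g x) = h (g y))))
    (a : X) :
    (∀ g₁ g₂ : X ≃ X, P g₁ → P g₂ → P (g₂.trans g₁)) ∧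
    (∀ g : X ≃ X, P g → P g.symm) ∧
    (∃ C : ℝ, ∀ g₁ g₂ : X ≃ X, P g₁ → P g₂ →
      |(h (g₁ (g₂ a)) - h a) - (h (g₁ a) - h a) - (h (g₂ a) - h a)| ≤ C) := by
  -- h commutes with the action globally
  have key : ∀ (n : ℤ) (z : X), h (e n z) = h z + n := by
    intro n z
    obtain ⟨m, hm, -⟩ := hpart z
    obtain ⟨z₀, hz₀, rfl⟩ := (hbij m).surjOn hm
    rw [headd, hform _ _ hz₀, hform _ _ hz₀]
    push_cast; ring
  have L : ∀ g : X ≃ X, P g → ∀ x y : X,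
      |h (g x) - h (g y) - (h x - h y)| ≤ 1 := by
    intro g hg x y
    obtain ⟨hc, hm, -⟩ := (hP g).1 hg
    set n := ⌊h x - h y⌋ with hn
    have h1 : (n : ℝ) ≤ h x - h y := Int.floor_le _
    have h2 : h x - h y < n + 1 := Int.lt_floor_add_one _
    have e1 : h (g x) ≥ h (g y) + n := by
      have hx : h x ≥ h (e n y) := by rw [key]; linarith
      have := (hm x (e n y)).2 hx
      rwa [hc, key] at this
    have e2 : h (g x) < h (g y) + ((n : ℝ) + 1) := by
      have hlt : ¬ h x ≥ h (e (n + 1) y) := by rw [key]; push_cast; linarith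
      have h3 : ¬ h (g x) ≥ h (g (e (n + 1) y)) :=
        fun hh => hlt ((hm x (e (n + 1) y)).1 hh)
      rw [hc, key] at h3
      push_cast at h3
      linarith
    rw [abs_le]
    constructor <;> linarith
  refine ⟨?_, ?_, ⟨1, ?_⟩⟩
  · intro g₁ g₂ h1 h2
    obtain ⟨c1, m1, l1⟩ := (hP g₁).1 h1
    obtain ⟨c2, m2, l2⟩ := (hP g₂).1 h2
    rw [hP]
    refine ⟨fun n x => ?_, fun x y => ?_, fun x y hxy => ?_⟩
    · simp only [Equiv.trans_apply, c2, c1]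
    · simp only [Equiv.trans_apply]
      rw [m1, m2]
    · simp only [Equiv.trans_apply]
      exact l1 _ _ (l2 _ _ hxy)
  · intro g hg
    obtain ⟨c, m, l⟩ := (hP g).1 hg
    rw [hP]
    have minv : ∀ x y : X, h (g.symm x) ≥ h (g.symm y) ↔ h x ≥ h y := by
      intro x y
      conv_rhs => rw [← g.apply_symm_apply x, ← g.apply_symm_apply y]
      exact (m _ _).symm
    refine ⟨fun n x => ?_, minv, fun x y hxy =>
      le_antisymm ((minv y x).2 hxy.le) ((minv x y).2 hxy.ge)⟩
    have h2 : g (e n (g.symm x)) = e n x := by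
      rw [c n (g.symm x), g.apply_symm_apply]
    exact g.symm_apply_eq.2 h2.symm
  · intro g₁ g₂ h1 h2
    have hL := L g₁ h1 (g₂ a) a
    have heq : (h (g₁ (g₂ a)) - h a) - (h (g₁ a) - h a) - (h (g₂ a) - h a)
        = h (g₁ (g₂ a)) - h (g₁ a) - (h (g₂ a) - h a) := by ring
    rw [heq]
    exact hL
end
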